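/- Let U, A, A′ be n×n matrices over a commutative ring K, with A and A′ alternating. Then there exist an element r ∈ K and an n×n matrix C over K such that A·adj(U)·A′ = r·Uᵀ + Uᵀ·C·Uᵀ. In particular, A·adj(U)·A′ is both left- and right-divisible by Uᵀ. -/

import Mathlib

/-!
Write `B = adj U`, `d = det U`, and `A = Y - Yᵀ`, `A' = Y' - Y'ᵀ` (an alternating matrix is
the difference of its strictly upper triangular part and its transpose). When `d` is regular,
Jacobi's theorem on minors of the adjugate makes every `(k + 1) × (k + 1)` minor of `B` divisible
by `d ^ k`. The entries of `Bᵀ A B` are combinations of `2 × 2` minors of `B`, so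
`ρ = ∑ Y'ₜₛ (Bᵀ A B)ₜₛ` is divisible by `d`; expanding `3 × 3` minors along their last row shows
that `Bᵀ A B A' Bᵀ + ρ Bᵀ` is a combination of `3 × 3` minors, hence of the form `d² C`.
Multiplying by `Uᵀ` on both sides and cancelling `d²` gives `A B A' = -(ρ / d) Uᵀ + Uᵀ C Uᵀ`.
For arbitrary `U`, apply this to the characteristic matrix of `-U` over `K[X]`, whose determinant
is monic, and evaluate at `0`.
-/

open Matrix Finset

namespace Matrix

section ReplaceRows

variable {m n o R : Type*} {ι : m → n}

/-- Row `ι p` of `M` is replaced by row `p` of `W`. -/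
noncomputable def replaceRows (M : Matrix n o R) (ι : m → n) (W : Matrix m o R) : Matrix n o R :=
  of (Function.extend ι W M)

theorem replaceRows_apply_self (hι : Function.Injective ι) (M : Matrix n o R) (W : Matrix m o R)
    (p : m) : replaceRows M ι W (ι p) = W p :=
  hι.extend_apply W M p

theorem replaceRows_apply_of_notMem (M : Matrix n o R) (W : Matrix m o R) {r : n}
    (hr : r ∉ Set.range ι) : replaceRows M ι W r = M r :=
  Function.extend_apply' W M r hr

theorem replaceRows_mul [Fintype o] [NonUnitalNonAssocSemiring R] (hι : Function.Injective ι)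
    (M : Matrix n o R) (W : Matrix m o R) (N : Matrix o o R) :
    replaceRows M ι W * N = replaceRows (M * N) ι (W * N) := by
  ext r c
  by_cases hr : r ∈ Set.range ι
  · obtain ⟨p, rfl⟩ := hr
    simp only [mul_apply, replaceRows_apply_self hι]
  · simp only [mul_apply, replaceRows_apply_of_notMem _ _ hr]

theorem replaceRows_smul [Fintype n] [DecidableEq n] [Semiring R] (hι : Function.Injective ι)
    (M : Matrix n o R) (W : Matrix m o R) (c : R) :
    replaceRows M ι (c • W) = diagonal (Function.extend ι (fun _ => c) 1) * replaceRows M ι W := by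
  ext r k
  by_cases hr : r ∈ Set.range ι
  · obtain ⟨p, rfl⟩ := hr
    simp [diagonal_mul, replaceRows_apply_self hι, hι.extend_apply]
  · simp [diagonal_mul, replaceRows_apply_of_notMem _ _ hr, Function.extend_apply' _ _ _ hr]

theorem _root_.Function.Injective.prod_extend_const [Fintype m] [Fintype n] [CommMonoid R]
    (hι : Function.Injective ι) (c : R) :
    ∏ r, Function.extend ι (fun _ => c) 1 r = c ^ Fintype.card m := by
  classical
  rw [← prod_subset (subset_univ (univ.image ι)), prod_image hι.injOn]
  · simp [hι.extend_apply]
  · intro r _ hr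
    exact Function.extend_apply' _ _ _ (by simpa using hr)

variable [Fintype m] [Fintype n] [DecidableEq n] [CommRing R]

theorem det_replaceRows_smul (hι : Function.Injective ι) (M : Matrix n n R) (W : Matrix m n R)
    (c : R) : (replaceRows M ι (c • W)).det = c ^ Fintype.card m * (replaceRows M ι W).det := by
  rw [replaceRows_smul hι, det_mul, det_diagonal, hι.prod_extend_const]

theorem det_replaceRows_one [DecidableEq m] (hι : Function.Injective ι) (W : Matrix m n R) :
    (replaceRows 1 ι W).det = (W.submatrix id ι).det := by
  classical
  rw [twoBlockTriangular_det _ (· ∈ Set.range ι)]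
  · have hcompl : toSquareBlockProp (replaceRows 1 ι W) (· ∉ Set.range ι) = 1 := by
      ext ⟨i, hi⟩ ⟨j, hj⟩
      simp [toSquareBlockProp, toBlock_apply, replaceRows_apply_of_notMem _ _ hi, one_apply]
    rw [hcompl, det_one, mul_one]
    convert (det_submatrix_equiv_self (Equiv.ofInjective ι hι)
      (toSquareBlockProp (replaceRows 1 ι W) (· ∈ Set.range ι))).symm using 2
    ext p q
    simp [toSquareBlockProp, toBlock_apply, replaceRows_apply_self hι]
  · intro i hi j hj
    rw [replaceRows_apply_of_notMem _ _ hi]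
    exact one_apply_ne (by rintro rfl; exact hi hj)

end ReplaceRows

theorem exists_eq_smul_of_forall_dvd {m o R : Type*} [Semigroup R] {c : R} {M : Matrix m o R}
    (h : ∀ i j, c ∣ M i j) : ∃ C : Matrix m o R, M = c • C := by
  choose C hC using h
  exact ⟨of C, by ext i j; simp [hC]⟩

section Sums

variable {n R : Type*} [Fintype n] [CommRing R]

theorem mul_sub_transpose_mul_apply (P Y Q : Matrix n n R) (a b : n) :
    (P * (Y - Yᵀ) * Q) a b = ∑ k, ∑ l, Y k l * (P a k * Q l b - P a l * Q k b) := by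
  simp only [mul_apply, sub_apply, transpose_apply, sum_mul, mul_sub, sub_mul, sum_sub_distrib]
  congr 1
  · rw [sum_comm]
    exact sum_congr rfl fun _ _ => sum_congr rfl fun _ _ => by ring
  · exact sum_congr rfl fun _ _ => sum_congr rfl fun _ _ => by ring

theorem transpose_mul_sub_mul_mul_sub_mul_transpose_apply_add (B Y Y' : Matrix n n R) (i j : n) :
    (Bᵀ * (Y - Yᵀ) * B * (Y' - Y'ᵀ) * Bᵀ) i j +
        (∑ t, ∑ s, Y' t s * (Bᵀ * (Y - Yᵀ) * B) t s) * B j i =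
      ∑ t, ∑ s, Y' t s * ∑ k, ∑ l, Y k l * (B.submatrix ![k, l, j] ![i, t, s]).det := by
  simp only [mul_sub_transpose_mul_apply, transpose_apply, sum_mul, mul_sum,
    ← sum_sub_distrib, ← sum_add_distrib]
  refine sum_congr rfl fun t _ => sum_congr rfl fun s _ => sum_congr rfl fun k _ =>
    sum_congr rfl fun l _ => ?_
  rw [det_fin_three]
  simp only [Fin.isValue, submatrix_apply, cons_val_zero, cons_val_one, cons_val]
  ring

end Sums

section Adjugate

variable {n R : Type*} [Fintype n] [DecidableEq n] [CommRing R]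

/-- Jacobi's theorem on the minors of the adjugate, the complementary minor of `U` being written
as the determinant of `U` with rows `ι` replaced by unit rows. -/
theorem det_submatrix_adjugate_mul_det {m : Type*} [Fintype m] [DecidableEq m] {ι : m → n}
    (U : Matrix n n R) (κ : m → n) (hι : Function.Injective ι) :
    (U.adjugate.submatrix κ ι).det * U.det =
      U.det ^ Fintype.card m * (replaceRows U ι ((1 : Matrix n n R).submatrix κ id)).det := by
  have hX : replaceRows 1 ι (U.adjugate.submatrix κ id) * U =
      replaceRows U ι (U.det • (1 : Matrix n n R).submatrix κ id) := by
    rw [replaceRows_mul hι, Matrix.one_mul]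
    congr 1
    ext p c
    simp only [mul_apply, submatrix_apply, id, smul_apply]
    rw [← mul_apply, adjugate_mul, smul_apply, id]
  have hminor := det_replaceRows_one hι (U.adjugate.submatrix κ id)
  rw [submatrix_submatrix, Function.comp_id, Function.id_comp] at hminor
  rw [← hminor, ← det_mul, hX, det_replaceRows_smul hι]

theorem pow_dvd_det_submatrix_adjugate {k : ℕ} (U : Matrix n n R) (hU : IsRegular U.det)
    (κ ι : Fin (k + 1) → n) : U.det ^ k ∣ (U.adjugate.submatrix κ ι).det := by
  by_cases hι : Function.Injective ι
  · have h := det_submatrix_adjugate_mul_det U κ hι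
    rw [Fintype.card_fin, pow_succ, mul_right_comm] at h
    exact ⟨_, hU.right h⟩
  · obtain ⟨a, b, hab, hne⟩ : ∃ a b, ι a = ι b ∧ a ≠ b := by
      simpa [Function.Injective] using hι
    rw [det_zero_of_column_eq hne fun r => by simp [hab]]
    exact dvd_zero _

variable {U : Matrix n n R}

theorem det_dvd_transpose_adjugate_mul_sub_mul_adjugate_apply (hU : IsRegular U.det)
    (Y : Matrix n n R) (a b : n) : U.det ∣ (U.adjugateᵀ * (Y - Yᵀ) * U.adjugate) a b := by
  rw [mul_sub_transpose_mul_apply]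
  refine dvd_sum fun k _ => dvd_sum fun l _ => dvd_mul_of_dvd_right ?_ _
  have h := pow_dvd_det_submatrix_adjugate (k := 1) U hU ![k, l] ![a, b]
  rw [det_fin_two] at h
  simpa [mul_comm] using h

theorem exists_sub_mul_adjugate_mul_sub_eq_of_isRegular (hU : IsRegular U.det)
    (Y Y' : Matrix n n R) : ∃ (r : R) (C : Matrix n n R),
      (Y - Yᵀ) * U.adjugate * (Y' - Y'ᵀ) = r • Uᵀ + Uᵀ * C * Uᵀ := by
  set B := U.adjugate
  set d := U.det
  set G := Bᵀ * (Y - Yᵀ) * B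
  obtain ⟨r, hr⟩ : d ∣ ∑ t, ∑ s, Y' t s * G t s :=
    dvd_sum fun t _ => dvd_sum fun s _ =>
      dvd_mul_of_dvd_right (det_dvd_transpose_adjugate_mul_sub_mul_adjugate_apply hU Y t s) _
  obtain ⟨C, hC⟩ : ∃ C, G * (Y' - Y'ᵀ) * Bᵀ + (d * r) • Bᵀ = d ^ 2 • C := by
    refine exists_eq_smul_of_forall_dvd fun i j => ?_
    rw [add_apply, smul_apply, transpose_apply, smul_eq_mul, ← hr,
      transpose_mul_sub_mul_mul_sub_mul_transpose_apply_add]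
    exact dvd_sum fun t _ => dvd_sum fun s _ => dvd_mul_of_dvd_right
      (dvd_sum fun k _ => dvd_sum fun l _ => dvd_mul_of_dvd_right
        (pow_dvd_det_submatrix_adjugate U hU ![k, l, j] ![i, t, s]) _) _
  have hUB : Uᵀ * Bᵀ = d • 1 := by
    rw [← transpose_mul, adjugate_mul, transpose_smul, transpose_one]
  have hBU : Bᵀ * Uᵀ = d • 1 := by
    rw [← transpose_mul, mul_adjugate, transpose_smul, transpose_one]
  have hscaled : d ^ 2 • (Uᵀ * C * Uᵀ) = d ^ 2 • ((Y - Yᵀ) * B * (Y' - Y'ᵀ) + r • Uᵀ) :=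
    calc d ^ 2 • (Uᵀ * C * Uᵀ) = Uᵀ * (d ^ 2 • C) * Uᵀ := by
          rw [Matrix.mul_smul, Matrix.smul_mul]
      _ = (Uᵀ * Bᵀ) * ((Y - Yᵀ) * B * (Y' - Y'ᵀ)) * (Bᵀ * Uᵀ) + (d * r) • ((Uᵀ * Bᵀ) * Uᵀ) := by
          rw [← hC]
          simp only [G, Matrix.mul_add, Matrix.add_mul, Matrix.mul_smul, Matrix.smul_mul,
            Matrix.mul_assoc]
      _ = d ^ 2 • ((Y - Yᵀ) * B * (Y' - Y'ᵀ) + r • Uᵀ) := by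
          rw [hUB, hBU]
          simp only [Matrix.smul_mul, Matrix.mul_smul, Matrix.one_mul, Matrix.mul_one]
          module
  refine ⟨-r, C, ?_⟩
  have hcancel : Uᵀ * C * Uᵀ = (Y - Yᵀ) * B * (Y' - Y'ᵀ) + r • Uᵀ := by
    ext i j
    exact (hU.pow 2).left (by simpa using congrFun (congrFun hscaled i) j)
  rw [hcancel]
  module

theorem charmatrix_neg_map_eval_zero (U : Matrix n n R) :
    (charmatrix (-U)).map (Polynomial.eval 0) = U := by
  ext i j
  by_cases h : i = j
  · subst h
    simp
  · simp [h]

theorem exists_sub_mul_adjugate_mul_sub_eq (U Y Y' : Matrix n n R) :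
    ∃ (r : R) (C : Matrix n n R),
      (Y - Yᵀ) * U.adjugate * (Y' - Y'ᵀ) = r • Uᵀ + Uᵀ * C * Uᵀ := by
  obtain ⟨r, C, h⟩ := exists_sub_mul_adjugate_mul_sub_eq_of_isRegular
    (charpoly_monic (-U)).isRegular (Y.map Polynomial.C) (Y'.map Polynomial.C)
  refine ⟨Polynomial.eval 0 r, C.map (Polynomial.eval 0), ?_⟩
  have h0 := congrArg (Polynomial.evalRingHom (0 : R)).mapMatrix h
  rw [map_add, map_mul, map_mul, map_mul, map_mul, map_sub, map_sub, RingHom.map_adjugate] at h0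
  simp only [RingHom.mapMatrix_apply, Polynomial.coe_evalRingHom] at h0
  rw [Matrix.map_smul' (Polynomial.eval 0) r _ fun _ _ => Polynomial.eval_mul] at h0
  simpa [transpose_map, Matrix.map_map, Function.comp_def, charmatrix_neg_map_eval_zero] using h0

end Adjugate

theorem exists_eq_sub_transpose {n R : Type*} [LinearOrder n] [AddCommGroup R]
    {A : Matrix n n R} (hA : Aᵀ = -A) (hdiag : ∀ i, A i i = 0) : ∃ Y, A = Y - Yᵀ := by
  refine ⟨of fun k l => if k < l then A k l else 0, ?_⟩
  ext k l
  rcases lt_trichotomy k l with h | rfl | h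
  · simp [h, not_lt_of_gt h]
  · simp [hdiag]
  · have hlk : A k l = -A l k := by simpa using congrFun (congrFun hA l) k
    simp [h, not_lt_of_gt h, hlk]

end Matrix

/-- Let `U`, `A`, `A'` be `n × n` matrices over a commutative ring `K`, with
`A` and `A'` alternating.  Then there exist an element `r ∈ K` and an `n × n` matrix `C` over
`K` such that `A * adjugate U * A' = r • Uᵀ + Uᵀ * C * Uᵀ`.  In particular, `A * adjugate U * A'`
is both left- and right-divisible by `Uᵀ`. -/
theorem statement4 (K : Type*) [CommRing K] (n : ℕ)
    (U A A' : Matrix (Fin n) (Fin n) K)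
    (hAalt : Aᵀ = -A ∧ ∀ i, A i i = 0)
    (hA'alt : A'ᵀ = -A' ∧ ∀ i, A' i i = 0) :
    (∃ (r : K) (C : Matrix (Fin n) (Fin n) K),
      A * U.adjugate * A' = r • Uᵀ + Uᵀ * C * Uᵀ) ∧
    (∃ P : Matrix (Fin n) (Fin n) K, A * U.adjugate * A' = Uᵀ * P) ∧
    (∃ Q : Matrix (Fin n) (Fin n) K, A * U.adjugate * A' = Q * Uᵀ) := by
  obtain ⟨Y, rfl⟩ := exists_eq_sub_transpose hAalt.1 hAalt.2
  obtain ⟨Y', rfl⟩ := exists_eq_sub_transpose hA'alt.1 hA'alt.2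
  obtain ⟨r, C, h⟩ := exists_sub_mul_adjugate_mul_sub_eq U Y Y'
  refine ⟨⟨r, C, h⟩, ⟨r • 1 + C * Uᵀ, ?_⟩, ⟨r • 1 + Uᵀ * C, ?_⟩⟩
  · rw [h, Matrix.mul_add, Matrix.mul_smul, Matrix.mul_one, Matrix.mul_assoc]
  · rw [h, Matrix.add_mul, Matrix.smul_mul, Matrix.one_mul, Matrix.mul_assoc]
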